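/- There exists a universal constant c ∈ (0, ∞) such that for every p ∈ [2, ∞) and every α ∈ (0, ∞), sup_{n∈ℕ} ‖Δ_{[n]}^{−α}‖_{p→p} ≥ c · (log p)^α / (2^α · Γ(1+α)); that is, there exist n ∈ ℕ and a nonzero h ∈ L_p^0({−1,1}^n) with ‖Δ_{[n]}^{−α} h‖_p ≥ c·(log p)^α/(2^α Γ(1+α))·‖h‖_p, where Γ is the Gamma function. -/

import Mathlib

open Finset

/-- The normalized `L_p` norm of a function on the discrete hypercube `{-1,1}^n`
(coordinates encoded by `Bool`). -/
noncomputable def pnorm {n : ℕ} (p : ℝ) (h : (Fin n → Bool) → ℝ) : ℝ :=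
  ((∑ ε : Fin n → Bool, |h ε| ^ p) / 2 ^ n) ^ (1 / p)

/-- The Walsh function `W_A(ε) = Π_{j ∈ A} ε_j`. -/
def walsh {n : ℕ} (A : Finset (Fin n)) (ε : Fin n → Bool) : ℝ :=
  ∏ j ∈ A, (if ε j then (1 : ℝ) else -1)

/-- The Fourier–Walsh coefficient `ĥ(A) = 2^{-n} Σ_ε h(ε) W_A(ε)`. -/
noncomputable def fourierCoef {n : ℕ} (h : (Fin n → Bool) → ℝ) (A : Finset (Fin n)) : ℝ :=
  (∑ ε : Fin n → Bool, h ε * walsh A ε) / 2 ^ n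

/-- `Δ_S^α h = Σ_{A ∩ S ≠ ∅} |A ∩ S|^α ĥ(A) W_A`. -/
noncomputable def deltaPow {n : ℕ} (S : Finset (Fin n)) (α : ℝ) (h : (Fin n → Bool) → ℝ) :
    (Fin n → Bool) → ℝ :=
  fun ε => ∑ A : Finset (Fin n),
    if (A ∩ S).Nonempty then ((A ∩ S).card : ℝ) ^ α * fourierCoef h A * walsh A ε else 0

/-- `E_S h`: averaging of `h` over the coordinates in `S`. -/
noncomputable def condAvg {n : ℕ} (S : Finset (Fin n)) (h : (Fin n → Bool) → ℝ) :
    (Fin n → Bool) → ℝ :=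
  fun ε => (∑ δ : Fin n → Bool, h (fun j => if j ∈ S then δ j else ε j)) / 2 ^ n

/-! The test function is the majority function `h` on `2N + 1` coordinates with `N = ⌈p⌉`,
so `|h| = 1` and `‖h‖_p = 1`. At the all-ones point `𝟙`,
`Δ^{-α} h (𝟙) = Σ_{A ≠ ∅} |A|^{-α} ĥ(A)`, and `k^{-α} = Γ(α)⁻¹ ∫₀^∞ t^{α-1} e^{-kt} dt` turns
this into `Γ(α)⁻¹ ∫₀^∞ t^{α-1} T_{e^{-t}} h (𝟙) dt`, where `T_u h (𝟙) = Σ_A u^{|A|} ĥ(A)` is the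
noise operator. `T_u` gives the point `ε` the weight
`(1 + u)^{#{ε_j = 1}} (1 - u)^{#{ε_j = -1}}`; on the half of the cube where `h = -1` this is at
most `(1 - u²)^N ≤ e^{-N u²}`, so `T_u h (𝟙) ≥ 1 - e^{-N u²}`. This is nonnegative for all
`t > 0` and at least `1/2` for `t ≤ (log p) / 2`, whence
`Δ^{-α} h (𝟙) ≥ ((log p) / 2)^α / (2 Γ(1 + α))`. Finally a single point carries `‖·‖_p`-mass
`2^{-(2N+1)/p} ≥ 1/16`. -/

open MeasureTheory Set Real

variable {n : ℕ}

def numFalse (ε : Fin n → Bool) : ℕ := #{j | ε j = false}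

def majority (ε : Fin n → Bool) : ℝ := if n < 2 * numFalse ε then -1 else 1

-- `2⁻ⁿ Σ_ε h ε * noiseKernel u ε` is the noise operator `T_u h` evaluated at the all-`true` point.
noncomputable def noiseKernel (u : ℝ) (ε : Fin n → Bool) : ℝ :=
  ∏ j, (1 + u * if ε j then 1 else -1)

lemma numFalse_le (ε : Fin n → Bool) : numFalse ε ≤ n := by
  simpa [numFalse] using card_filter_le univ fun j => ε j = false

lemma numFalse_not (ε : Fin n → Bool) : numFalse (fun j => !ε j) = n - numFalse ε := by
  have := card_filter_add_card_filter_not (s := univ) (p := fun j => ε j = false)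
  simp only [card_univ, Fintype.card_fin] at this
  simp only [numFalse, Bool.not_eq_false', Bool.not_eq_false] at *
  omega

lemma sum_pow_card_mul_walsh (u : ℝ) (ε : Fin n → Bool) :
    ∑ A : Finset (Fin n), u ^ #A * walsh A ε = noiseKernel u ε := by
  simp only [noiseKernel, add_comm (1 : ℝ), Fintype.prod_add, prod_const_one, mul_one,
    prod_mul_distrib, prod_const, walsh]

lemma noiseKernel_eq (u : ℝ) (ε : Fin n → Bool) :
    noiseKernel u ε = (1 + u) ^ (n - numFalse ε) * (1 - u) ^ numFalse ε := by
  have hfactor : ∀ b : Bool,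
      (1 + u * if b then 1 else -1) = if b = true then 1 + u else 1 - u := by
    intro b; cases b <;> norm_num [sub_eq_add_neg]
  simp only [noiseKernel, hfactor, prod_ite, prod_const, ← numFalse_not]
  simp [numFalse]

lemma sum_noiseKernel (u : ℝ) : ∑ ε : Fin n → Bool, noiseKernel u ε = 2 ^ n := by
  refine (Fintype.prod_sum fun (_ : Fin n) (b : Bool) =>
    1 + u * if b then (1 : ℝ) else -1).symm.trans ?_
  norm_num [Fintype.sum_bool, ← sub_eq_add_neg]

lemma card_filter_lt_two_mul_numFalse (N : ℕ) :
    #{ε : Fin (2 * N + 1) → Bool | 2 * N + 1 < 2 * numFalse ε} = 2 ^ (2 * N) := by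
  have hflip : #{ε : Fin (2 * N + 1) → Bool | 2 * N + 1 < 2 * numFalse ε} =
      #{ε : Fin (2 * N + 1) → Bool | ¬ 2 * N + 1 < 2 * numFalse ε} := by
    refine card_nbij' (fun ε j => !ε j) (fun ε j => !ε j) ?_ ?_ ?_ ?_ <;>
      intro ε hε <;> simp_all [numFalse_not] <;> omega
  have htotal := card_filter_add_card_filter_not (s := univ)
    (p := fun ε : Fin (2 * N + 1) → Bool => 2 * N + 1 < 2 * numFalse ε)
  rw [card_univ, Fintype.card_fun, Fintype.card_bool, Fintype.card_fin, ← hflip,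
    pow_succ] at htotal
  omega

lemma majority_mul (ε : Fin n → Bool) (x : ℝ) :
    majority ε * x = x - 2 * if n < 2 * numFalse ε then x else 0 := by
  unfold majority; split_ifs <;> ring

lemma abs_majority (ε : Fin n → Bool) : |majority ε| = 1 := by
  unfold majority; split_ifs <;> norm_num

lemma majority_ne_zero : (majority : (Fin n → Bool) → ℝ) ≠ 0 := fun h => by
  simpa [majority, numFalse] using congrFun h fun _ => true

lemma sum_majority (N : ℕ) : ∑ ε : Fin (2 * N + 1) → Bool, majority ε = 0 := by
  have hmaj (ε : Fin (2 * N + 1) → Bool) := mul_one (majority ε) ▸ majority_mul ε 1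
  simp only [hmaj, sum_sub_distrib, ← mul_sum, ← sum_filter, sum_const,
    card_filter_lt_two_mul_numFalse, card_univ, Fintype.card_fun, Fintype.card_bool,
    Fintype.card_fin]
  ring

lemma one_add_pow_mul_one_sub_pow_succ_le_exp (N : ℕ) {u : ℝ} (hu₀ : 0 ≤ u) (hu₁ : u ≤ 1) :
    (1 + u) ^ N * (1 - u) ^ (N + 1) ≤ exp (-(N * u ^ 2)) := by
  have hsq : 0 ≤ 1 - u ^ 2 := by nlinarith
  calc (1 + u) ^ N * (1 - u) ^ (N + 1) = (1 - u ^ 2) ^ N * (1 - u) := by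
        rw [show 1 - u ^ 2 = (1 + u) * (1 - u) by ring, mul_pow, pow_succ, mul_assoc]
    _ ≤ (1 - u ^ 2) ^ N := mul_le_of_le_one_right (pow_nonneg hsq N) (by linarith)
    _ ≤ exp (-u ^ 2) ^ N := by
        gcongr
        linarith [add_one_le_exp (-u ^ 2)]
    _ = exp (-(N * u ^ 2)) := by rw [← exp_nat_mul]; ring_nf

lemma sum_majority_mul_noiseKernel_ge (N : ℕ) {u : ℝ} (hu₀ : 0 ≤ u) (hu₁ : u ≤ 1) :
    2 ^ (2 * N + 1) * (1 - exp (-(N * u ^ 2))) ≤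
      ∑ ε : Fin (2 * N + 1) → Bool, majority ε * noiseKernel u ε := by
  have hminority :
      ∀ ε ∈ ({ε | 2 * N + 1 < 2 * numFalse ε} : Finset (Fin (2 * N + 1) → Bool)),
        noiseKernel u ε ≤ (1 + u) ^ N * (1 - u) ^ (N + 1) := by
    intro ε hε
    have hd := (mem_filter.mp hε).2
    have := numFalse_le ε
    rw [noiseKernel_eq]
    exact mul_le_mul (pow_le_pow_right₀ (by linarith) (by omega))
      (pow_le_pow_of_le_one (by linarith) (by linarith) (by omega)) (by positivity)
      (pow_nonneg (by linarith) _)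
  have hsum := sum_le_card_nsmul _ _ _ hminority
  rw [card_filter_lt_two_mul_numFalse, nsmul_eq_mul] at hsum
  simp only [majority_mul, sum_sub_distrib, ← mul_sum, ← sum_filter, sum_noiseKernel]
  calc (2 : ℝ) ^ (2 * N + 1) * (1 - exp (-(N * u ^ 2)))
      = 2 ^ (2 * N + 1) - 2 * (2 ^ (2 * N) * exp (-(N * u ^ 2))) := by ring
    _ ≤ _ := by
        gcongr
        exact_mod_cast hsum.trans (mul_le_mul_of_nonneg_left
          (one_add_pow_mul_one_sub_pow_succ_le_exp N hu₀ hu₁) (by positivity))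

lemma integrableOn_rpow_mul_exp_neg_mul {α k : ℝ} (hα : 0 < α) (hk : 0 < k) :
    IntegrableOn (fun t : ℝ => t ^ (α - 1) * exp (-(k * t))) (Ioi 0) :=
  .of_integral_ne_zero (by rw [integral_rpow_mul_exp_neg_mul_Ioi hα hk]; positivity)

section GammaRepresentation

variable {ι : Type*} (s : Finset ι) (c : ι → ℝ) {k : ι → ℝ} {α : ℝ}

lemma integrableOn_rpow_mul_sum_exp (hk : ∀ i ∈ s, 0 < k i) (hα : 0 < α) :
    IntegrableOn (fun t : ℝ => t ^ (α - 1) * ∑ i ∈ s, c i * exp (-(k i * t))) (Ioi 0) := by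
  simp only [mul_sum, mul_left_comm _ (c _)]
  exact integrable_finsetSum _ fun i hi =>
    (integrableOn_rpow_mul_exp_neg_mul hα (hk i hi)).const_mul (c i)

lemma integral_rpow_mul_sum_exp (hk : ∀ i ∈ s, 0 < k i) (hα : 0 < α) :
    ∫ t in Ioi 0, t ^ (α - 1) * ∑ i ∈ s, c i * exp (-(k i * t)) =
      Gamma α * ∑ i ∈ s, c i * k i ^ (-α) := by
  simp only [mul_sum, mul_left_comm _ (c _)]
  rw [integral_finsetSum _ fun i hi =>
    (integrableOn_rpow_mul_exp_neg_mul hα (hk i hi)).const_mul (c i)]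
  refine sum_congr rfl fun i hi => ?_
  rw [integral_const_mul, integral_rpow_mul_exp_neg_mul_Ioi hα (hk i hi), one_div,
    inv_rpow (hk i hi).le, ← rpow_neg (hk i hi).le]
  ring

end GammaRepresentation

lemma mul_rpow_div_le_integral_rpow_mul {g : ℝ → ℝ} {α T C : ℝ} (hα : 0 < α) (hT : 0 < T)
    (hint : IntegrableOn (fun t => t ^ (α - 1) * g t) (Ioi 0))
    (hg₀ : ∀ t, 0 < t → 0 ≤ g t) (hgC : ∀ t ∈ Ioc 0 T, C ≤ g t) :
    C * (T ^ α / α) ≤ ∫ t in Ioi 0, t ^ (α - 1) * g t := by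
  have hpow : IntegrableOn (fun t : ℝ => t ^ (α - 1) * C) (Ioc 0 T) :=
    ((intervalIntegrable_iff_integrableOn_Ioc_of_le hT.le).mp
      (intervalIntegral.intervalIntegrable_rpow' (by linarith))).mul_const C
  calc C * (T ^ α / α) = ∫ t in Ioc 0 T, t ^ (α - 1) * C := by
        rw [← intervalIntegral.integral_of_le hT.le, intervalIntegral.integral_mul_const,
          integral_rpow (Or.inl (by linarith)), sub_add_cancel, zero_rpow hα.ne', sub_zero,
          mul_comm]
    _ ≤ ∫ t in Ioc 0 T, t ^ (α - 1) * g t :=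
        setIntegral_mono_on hpow (hint.mono_set Ioc_subset_Ioi_self) measurableSet_Ioc
          fun t ht => mul_le_mul_of_nonneg_left (hgC t ht) (rpow_nonneg ht.1.le _)
    _ ≤ ∫ t in Ioi 0, t ^ (α - 1) * g t := by
        refine setIntegral_mono_set hint ?_ Ioc_subset_Ioi_self.eventuallyLE
        filter_upwards [ae_restrict_mem measurableSet_Ioi] with t ht
        exact mul_nonneg (rpow_nonneg ht.le _) (hg₀ t ht)

lemma deltaPow_univ_apply_true (α : ℝ) (h : (Fin n → Bool) → ℝ) :
    deltaPow univ α h (fun _ => true) =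
      ∑ A ∈ {A : Finset (Fin n) | A.Nonempty}, fourierCoef h A * (#A : ℝ) ^ α := by
  simp [deltaPow, walsh, sum_filter, mul_comm]

lemma fourierCoef_empty (h : (Fin n → Bool) → ℝ) :
    fourierCoef h ∅ = (∑ ε, h ε) / 2 ^ n := by
  simp [fourierCoef, walsh]

lemma sum_fourierCoef_mul_pow (h : (Fin n → Bool) → ℝ) (u : ℝ) :
    ∑ A, fourierCoef h A * u ^ #A = (∑ ε, h ε * noiseKernel u ε) / 2 ^ n := by
  simp only [fourierCoef, div_mul_eq_mul_div, ← sum_div, sum_mul, ← sum_pow_card_mul_walsh,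
    mul_sum]
  rw [sum_comm]
  congr 1
  refine sum_congr rfl fun ε _ => sum_congr rfl fun A _ => ?_
  ring

lemma pnorm_of_abs_eq_one {h : (Fin n → Bool) → ℝ} (hh : ∀ ε, |h ε| = 1) (p : ℝ) :
    pnorm p h = 1 := by
  simp [pnorm, hh]

lemma abs_apply_le_rpow_mul_pnorm {p : ℝ} (hp : 0 < p) (g : (Fin n → Bool) → ℝ)
    (ε₀ : Fin n → Bool) : |g ε₀| ≤ (2 : ℝ) ^ (n / p) * pnorm p g := by
  have hsum : |g ε₀| ^ p ≤ ∑ ε, |g ε| ^ p :=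
    single_le_sum (fun ε _ => rpow_nonneg (abs_nonneg _) p) (mem_univ ε₀)
  calc |g ε₀| = (|g ε₀| ^ p) ^ (1 / p) := by
        rw [← rpow_mul (abs_nonneg _), mul_one_div_cancel hp.ne', rpow_one]
    _ ≤ (∑ ε, |g ε| ^ p) ^ (1 / p) := by gcongr
    _ = (2 : ℝ) ^ (n / p) * pnorm p g := by
        rw [pnorm, div_rpow (by positivity) (by positivity), ← rpow_natCast,
          ← rpow_mul (by norm_num), mul_one_div, mul_div_cancel₀ _ (by positivity)]

lemma one_sub_exp_le_sum_fourierCoef_majority_mul_exp (N : ℕ) {t : ℝ} (ht : 0 ≤ t) :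
    1 - exp (-(N * exp (-t) ^ 2)) ≤
      ∑ A ∈ {A : Finset (Fin (2 * N + 1)) | A.Nonempty},
        fourierCoef majority A * exp (-(#A * t)) := by
  have hcoef : fourierCoef (majority : (Fin (2 * N + 1) → Bool) → ℝ) ∅ = 0 := by
    rw [fourierCoef_empty, sum_majority, zero_div]
  have hnoise := sum_majority_mul_noiseKernel_ge N (exp_nonneg (-t))
    (exp_le_one_iff.mpr (by linarith))
  calc 1 - exp (-(N * exp (-t) ^ 2))
      ≤ (∑ ε, majority ε * noiseKernel (exp (-t)) ε) / 2 ^ (2 * N + 1) := by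
        rw [le_div_iff₀ (by positivity), mul_comm]; exact hnoise
    _ = ∑ A, fourierCoef majority A * exp (-t) ^ #A := (sum_fourierCoef_mul_pow _ _).symm
    _ = _ := by
        rw [← sum_filter_of_ne (p := fun A => A.Nonempty) fun A _ hA => ?_]
        · simp only [← exp_nat_mul, mul_neg]
        · rw [Finset.nonempty_iff_ne_empty]; rintro rfl; simp [hcoef] at hA

lemma div_le_deltaPow_majority_apply_true (N : ℕ) {α T : ℝ} (hα : 0 < α) (hT : 0 < T)
    (hN : exp (2 * T) ≤ N) :
    T ^ α / (2 * Gamma (1 + α)) ≤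
      deltaPow univ (-α) (majority : (Fin (2 * N + 1) → Bool) → ℝ) (fun _ => true) := by
  set s : Finset (Finset (Fin (2 * N + 1))) := {A | A.Nonempty}
  have hcard : ∀ A ∈ s, (0 : ℝ) < #A := fun A hA => by
    simpa [s, card_pos] using hA
  have hg := fun t (ht : 0 ≤ t) => one_sub_exp_le_sum_fourierCoef_majority_mul_exp N ht
  have hg₀ : ∀ t, 0 < t → 0 ≤ ∑ A ∈ s, fourierCoef majority A * exp (-(#A * t)) :=
    fun t ht => (sub_nonneg.mpr (exp_le_one_iff.mpr (neg_nonpos.mpr (by positivity)))).trans (hg t ht.le)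
  have hg_half : ∀ t ∈ Ioc 0 T, 1 / 2 ≤ ∑ A ∈ s, fourierCoef majority A * exp (-(#A * t)) :=
    fun t ht => by
      have hNt : 1 ≤ N * exp (-t) ^ 2 :=
        calc 1 ≤ exp (2 * T) * exp (-(2 * t)) := by
              rw [← exp_add]; exact one_le_exp (by linarith [ht.2])
          _ ≤ N * exp (-t) ^ 2 := by
              rw [← exp_nat_mul]; push_cast; rw [mul_neg]
              exact mul_le_mul_of_nonneg_right hN (exp_nonneg _)
      calc (1 : ℝ) / 2 ≤ 1 - exp (-1) := by
            rw [exp_neg]; linarith [inv_anti₀ two_pos exp_one_gt_two.le]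
        _ ≤ 1 - exp (-(N * exp (-t) ^ 2)) := by gcongr
        _ ≤ _ := hg t ht.1.le
  have hint := mul_rpow_div_le_integral_rpow_mul hα hT
    (integrableOn_rpow_mul_sum_exp s _ hcard hα) hg₀ hg_half
  rw [integral_rpow_mul_sum_exp s _ hcard hα] at hint
  rw [deltaPow_univ_apply_true, add_comm, Gamma_add_one hα.ne',
    div_le_iff₀ (by positivity [Gamma_pos_of_pos hα])]
  calc T ^ α = 2 * α * (1 / 2 * (T ^ α / α)) := by field_simp
    _ ≤ 2 * α * (Gamma α * ∑ A ∈ s, fourierCoef majority A * (#A : ℝ) ^ (-α)) := by gcongr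
    _ = _ := by ring

/-- **Lemma 3.2, lower bound** (inequality (3.13)): there is a universal `c > 0` such that for
every `p ∈ [2,∞)` and every `α ∈ (0,∞)`, `sup_n ‖Δ_{[n]}^{-α}‖_{p→p} ≥ c (log p)^α/(2^α Γ(1+α))`,
i.e. there are `n ∈ ℕ` and a nonzero mean-zero `h : {-1,1}^n → ℝ` with
`‖Δ_{[n]}^{-α} h‖_p ≥ c (log p)^α/(2^α Γ(1+α)) ‖h‖_p`. -/
theorem deltaPow_neg_opNorm_lower :
    ∃ c : ℝ, 0 < c ∧ ∀ p : ℝ, 2 ≤ p → ∀ α : ℝ, 0 < α →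
      ∃ n : ℕ, ∃ h : (Fin n → Bool) → ℝ, (∑ ε : Fin n → Bool, h ε) = 0 ∧ h ≠ 0 ∧
        c * (Real.log p) ^ α / ((2 : ℝ) ^ α * Real.Gamma (1 + α)) * pnorm p h ≤
          pnorm p (deltaPow (univ : Finset (Fin n)) (-α) h) := by
  refine ⟨1 / 32, by norm_num, fun p hp α hα => ?_⟩
  set N := ⌈p⌉₊
  refine ⟨2 * N + 1, majority, sum_majority N, majority_ne_zero, ?_⟩
  have hp₀ : 0 < p := by linarith
  have hlog : 0 < log p := log_pos (by linarith)
  have hvalue := div_le_deltaPow_majority_apply_true N hα (half_pos hlog)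
    (by rw [mul_div_cancel₀ _ two_ne_zero, exp_log hp₀]; exact Nat.le_ceil p)
  have hscale : (2 : ℝ) ^ (((2 * N + 1 : ℕ) : ℝ) / p) ≤ 16 := by
    have : ((2 * N + 1 : ℕ) : ℝ) / p ≤ 4 := by
      rw [div_le_iff₀ hp₀]; push_cast; linarith [Nat.ceil_lt_add_one hp₀.le]
    calc _ ≤ (2 : ℝ) ^ (4 : ℝ) := rpow_le_rpow_of_exponent_le (by norm_num) this
      _ = 16 := by norm_num
  set Δh := deltaPow univ (-α) (majority : (Fin (2 * N + 1) → Bool) → ℝ)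
  have hnorm : 0 ≤ pnorm p Δh := rpow_nonneg (by positivity) _
  rw [pnorm_of_abs_eq_one abs_majority, mul_one]
  calc 1 / 32 * log p ^ α / (2 ^ α * Gamma (1 + α))
      = (log p / 2) ^ α / (2 * Gamma (1 + α)) / 16 := by
        rw [div_rpow hlog.le zero_le_two]; field_simp; ring
    _ ≤ |Δh fun _ => true| / 16 := by gcongr; exact hvalue.trans (le_abs_self _)
    _ ≤ pnorm p Δh := by
        rw [div_le_iff₀ (by norm_num)]
        exact (abs_apply_le_rpow_mul_pnorm hp₀ Δh _).trans
          ((mul_le_mul_of_nonneg_right hscale hnorm).trans_eq (mul_comm _ _))
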